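/- arXiv:2006.14748 — 4 statements merged into one kernel-verified Lean document; each statement's English description precedes it below -/
import Mathlib

section
/- Let f : ℝ^n → ℝ^C be a classifier assigning to each input a score f_c(x) for every class c ∈ {1,…,C}, and let I : ℝ^n × {1,…,C} → ℝ^u be an interpreter satisfying the completeness axiom: for all inputs x and classes c, the sum over all coordinates i of [I(x,c)]_i equals f_c(x). Suppose x is a natural example predicted as class y (so f_y(x) ≥ f_j(x) for all j) and x′ is an adversarial example predicted as class y′ ≠ y (so f_{y′}(x′) ≥ f_j(x′) for all j, in particular f_{y′}(x′) ≥ f_y(x′)). Then the ℓ₁ two-class interpretation discrepancy satisfies (1/2)(‖I(x,y) − I(x′,y)‖₁ + ‖I(x,y′) − I(x′,y′)‖₁) ≥ (1/2)(f_y(x) − f_{y′}(x)). -/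
/-! By completeness, the score gap `f_c(x) − f_c(x′)` of any class `c` is the coordinate sum of
`I(x,c) − I(x′,c)`, hence at most its ℓ₁ norm. The margin `f_y(x) − f_{y′}(x)` telescopes through
`x′` as `(f_y(x) − f_y(x′)) + (f_y(x′) − f_{y′}(x′)) + (f_{y′}(x′) − f_{y′}(x))`, whose middle term
is nonpositive because `x′` is predicted as `y′`. -/

theorem abs_sub_le_sum_abs_sub_of_sum_eq {X K ι : Type*} [Fintype ι] {f : X → K → ℝ}
    {I : X → K → ι → ℝ} (hcomp : ∀ x c, ∑ i, I x c i = f x c) (x x' : X) (c : K) :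
    |f x c - f x' c| ≤ ∑ i, |I x c i - I x' c i| := by
  simpa only [hcomp, Real.dist_eq] using dist_sum_sum_le Finset.univ (I x c) (I x' c)

theorem l1_two_class_discrepancy_lower_bound_general
    (n C u : ℕ)
    (f : (Fin n → ℝ) → Fin C → ℝ)
    (I : (Fin n → ℝ) → Fin C → Fin u → ℝ)
    (hcomp : ∀ x c, ∑ i, I x c i = f x c)
    (x x' : Fin n → ℝ) (y y' : Fin C)
    (hy' : ∀ j, f x' j ≤ f x' y') :
    (1 / 2) * (f x y - f x y') ≤
      (1 / 2) * ((∑ i, |I x y i - I x' y i|) + (∑ i, |I x y' i - I x' y' i|)) := by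
  obtain ⟨-, hgap_y⟩ := abs_le.mp (abs_sub_le_sum_abs_sub_of_sum_eq hcomp x x' y)
  obtain ⟨hgap_y', -⟩ := abs_le.mp (abs_sub_le_sum_abs_sub_of_sum_eq hcomp x x' y')
  linarith [hy' y]

/-- **Proposition 1 (completeness axiom case).**
If the interpreter `I` satisfies the completeness axiom
`∑ i, [I(x,c)]ᵢ = f_c(x)`, `x` is predicted as class `y` and the adversarial
example `x'` is predicted as class `y' ≠ y`, then the ℓ₁ two-class
interpretation discrepancy is bounded below by half the classification margin:
`(1/2)(‖I(x,y) − I(x',y)‖₁ + ‖I(x,y') − I(x',y')‖₁) ≥ (1/2)(f_y(x) − f_{y'}(x))`. -/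
theorem l1_two_class_discrepancy_lower_bound
    (n C u : ℕ)
    (f : (Fin n → ℝ) → Fin C → ℝ)
    (I : (Fin n → ℝ) → Fin C → Fin u → ℝ)
    (hcomp : ∀ x c, ∑ i, I x c i = f x c)
    (x x' : Fin n → ℝ) (y y' : Fin C)
    (hy : ∀ j, f x j ≤ f x y)
    (hy' : ∀ j, f x' j ≤ f x' y')
    (hne : y' ≠ y) :
    (1 / 2) * (f x y - f x y') ≤
      (1 / 2) * ((∑ i, |I x y i - I x' y i|) + (∑ i, |I x y' i - I x' y' i|)) :=
  l1_two_class_discrepancy_lower_bound_general n C u f I hcomp x x' y y' hy'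
end

section
/- Let f : ℝ^n → ℝ^C be a classifier, let a > 0 be a scaling factor, and let I : ℝ^n × {1,…,C} → ℝ^u be an interpreter satisfying the scaled completeness axiom: for all inputs x and classes c, Σ_{i=1}^{u} [I(x,c)]_i = a · f_c(x). Suppose x is predicted as class y and x′ is predicted as class y′ ≠ y (in particular f_{y′}(x′) ≥ f_y(x′)). Then (1/2)(‖I(x,y) − I(x′,y)‖₁ + ‖I(x,y′) − I(x′,y′)‖₁) ≥ (a/2)(f_y(x) − f_{y′}(x)). -/
/-! Summing `I(x,c) − I(x',c)` over the coordinates and using completeness shows that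
`a · |f_c(x) − f_c(x')|` is at most `‖I(x,c) − I(x',c)‖₁`, for every class `c`.
Apply this with `c = y` and `c = y'` and add: the left-hand sides telescope through
`a · (f_y(x') − f_{y'}(x'))`, which is `≤ 0` because `x'` is predicted as `y'`. -/

theorem Finset.abs_sum_sub_sum_le_sum_abs_sub {ι α : Type*} [AddCommGroup α] [LinearOrder α]
    [IsOrderedAddMonoid α] (s : Finset ι) (g h : ι → α) :
    |∑ i ∈ s, g i - ∑ i ∈ s, h i| ≤ ∑ i ∈ s, |g i - h i| := by
  rw [← Finset.sum_sub_distrib]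
  exact Finset.abs_sum_le_sum_abs _ _

theorem abs_score_sub_le_l1_of_scaled_completeness {X K ι : Type*} [Fintype ι]
    (f : X → K → ℝ) (a : ℝ) (I : X → K → ι → ℝ) (hcomp : ∀ x c, ∑ i, I x c i = a * f x c)
    (x x' : X) (c : K) :
    |a * (f x c - f x' c)| ≤ ∑ i, |I x c i - I x' c i| := by
  rw [mul_sub, ← hcomp, ← hcomp]
  exact Finset.abs_sum_sub_sum_le_sum_abs_sub _ _ _

theorem l1_two_class_discrepancy_lower_bound_scaled_general
    (n C u : ℕ)
    (f : (Fin n → ℝ) → Fin C → ℝ)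
    (a : ℝ) (ha : 0 < a)
    (I : (Fin n → ℝ) → Fin C → Fin u → ℝ)
    (hcomp : ∀ x c, ∑ i, I x c i = a * f x c)
    (x x' : Fin n → ℝ) (y y' : Fin C)
    (hy' : ∀ j, f x' j ≤ f x' y') :
    (a / 2) * (f x y - f x y') ≤
      (1 / 2) * ((∑ i, |I x y i - I x' y i|) + (∑ i, |I x y' i - I x' y' i|)) := by
  have hgap_y := (le_abs_self _).trans
    (abs_score_sub_le_l1_of_scaled_completeness f a I hcomp x x' y)
  have hgap_y' := (neg_le_abs _).trans
    (abs_score_sub_le_l1_of_scaled_completeness f a I hcomp x x' y')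
  have hpred : a * f x' y ≤ a * f x' y' := mul_le_mul_of_nonneg_left (hy' y) ha.le
  linarith

/-- **Proposition 1 (scaled completeness axiom).**
If the interpreter `I` satisfies `∑ i, [I(x,c)]ᵢ = a · f_c(x)` for some scaling
factor `a > 0`, `x` is predicted as class `y` and `x'` is predicted as class
`y' ≠ y`, then
`(1/2)(‖I(x,y) − I(x',y)‖₁ + ‖I(x,y') − I(x',y')‖₁) ≥ (a/2)(f_y(x) − f_{y'}(x))`. -/
theorem l1_two_class_discrepancy_lower_bound_scaled
    (n C u : ℕ)
    (f : (Fin n → ℝ) → Fin C → ℝ)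
    (a : ℝ) (ha : 0 < a)
    (I : (Fin n → ℝ) → Fin C → Fin u → ℝ)
    (hcomp : ∀ x c, ∑ i, I x c i = a * f x c)
    (x x' : Fin n → ℝ) (y y' : Fin C)
    (hy : ∀ j, f x j ≤ f x y)
    (hy' : ∀ j, f x' j ≤ f x' y')
    (hne : y' ≠ y) :
    (a / 2) * (f x y - f x y') ≤
      (1 / 2) * ((∑ i, |I x y i - I x' y i|) + (∑ i, |I x y' i - I x' y' i|)) :=
  l1_two_class_discrepancy_lower_bound_scaled_general n C u f a ha I hcomp x x' y y' hy'
end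

section
/- Let f : ℝ^n → ℝ^C be a classifier, let g : ℝ → ℝ be any function, and let I : ℝ^n × {1,…,C} → ℝ^u be an interpreter satisfying the generalized completeness axiom: Σ_{i=1}^{u} [I(x,c)]_i = g(f_c(x)) for all inputs x and classes c. Then for any two inputs x, x′ ∈ ℝ^n and any two classes y, y′, [g(f_{y′}(x′)) − g(f_y(x′))] + [g(f_y(x)) − g(f_{y′}(x))] ≤ ‖I(x′,y′) − I(x,y′)‖₁ + ‖I(x,y) − I(x′,y)‖₁. -/
open Finset

theorem Finset.sum_sub_sum_le_sum_abs_sub {ι : Type*} (s : Finset ι) (a b : ι → ℝ) :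
    ∑ i ∈ s, a i - ∑ i ∈ s, b i ≤ ∑ i ∈ s, |a i - b i| := by
  simpa only [Real.dist_eq] using (le_abs_self _).trans (dist_sum_sum_le s a b)

/-- **Two-class interpretation bound.**
If the interpreter `I` satisfies the generalized completeness axiom
`∑ i, [I(x,c)]ᵢ = g(f_c(x))`, then for any inputs `x, x'` and classes `y, y'`,
`[g(f_{y'}(x')) − g(f_y(x'))] + [g(f_y(x)) − g(f_{y'}(x))]
  ≤ ‖I(x',y') − I(x,y')‖₁ + ‖I(x,y) − I(x',y)‖₁`. -/
theorem two_class_margin_change_le_l1_discrepancy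
    (n C u : ℕ)
    (f : (Fin n → ℝ) → Fin C → ℝ)
    (g : ℝ → ℝ)
    (I : (Fin n → ℝ) → Fin C → Fin u → ℝ)
    (hcomp : ∀ x c, ∑ i, I x c i = g (f x c))
    (x x' : Fin n → ℝ) (y y' : Fin C) :
    (g (f x' y') - g (f x' y)) + (g (f x y) - g (f x y')) ≤
      (∑ i, |I x' y' i - I x y' i|) + (∑ i, |I x y i - I x' y i|) := by
  have score_change_le (c : Fin C) (z z' : Fin n → ℝ) :
      g (f z c) - g (f z' c) ≤ ∑ i, |I z c i - I z' c i| := by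
    simpa only [hcomp] using sum_sub_sum_le_sum_abs_sub univ (I z c) (I z' c)
  -- regroup the two margin changes by class
  linarith [score_change_le y' x' x, score_change_le y x x']
end

section
/- Let F : ℝ^d → ℝ be continuously differentiable and let x, a ∈ ℝ^d. Define the integrated gradients attribution of coordinate i as IG_i = (x_i − a_i) · ∫_0^1 (∂F/∂x_i)(a + α(x − a)) dα. Then integrated gradients satisfies the completeness axiom: Σ_{i=1}^{d} IG_i = F(x) − F(a). -/
/-!
Write `φ α` for the derivative of `F` at `a + α • (x - a)`. Each integral in the sum is
`(∫ φ) (eᵢ)`, so by linearity of the averaged derivative `∫ φ` the sum is `(∫ φ) (x - a)`,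
which is `∫ φ α (x - a) dα`: the integral of the derivative of `α ↦ F (a + α • (x - a))` over
`[0, 1]`, equal to `F x - F a` by the fundamental theorem of calculus.
-/

open intervalIntegral

section Segment

variable {E G : Type*} [NormedAddCommGroup E] [NormedSpace ℝ E]
  [NormedAddCommGroup G] [NormedSpace ℝ G] {f : E → G}

theorem ContDiff.continuous_fderiv_segment (hf : ContDiff ℝ 1 f) (a x : E) :
    Continuous fun t : ℝ => fderiv ℝ f (a + t • (x - a)) :=
  (hf.continuous_fderiv one_ne_zero).comp (by fun_prop)

theorem ContDiff.integral_fderiv_segment_apply [CompleteSpace G] (hf : ContDiff ℝ 1 f)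
    (a x : E) :
    ∫ t in (0:ℝ)..1, fderiv ℝ f (a + t • (x - a)) (x - a) = f x - f a := by
  have hderiv : ∀ t : ℝ,
      HasDerivAt (fun s : ℝ => f (a + s • (x - a))) (fderiv ℝ f (a + t • (x - a)) (x - a)) t := by
    intro t
    have hpath : HasDerivAt (fun s : ℝ => a + s • (x - a)) (x - a) t := by
      simpa using ((hasDerivAt_id t).smul_const (x - a)).const_add a
    exact ((hf.differentiable one_ne_zero) _).hasFDerivAt.comp_hasDerivAt t hpath
  have hcont : Continuous fun t : ℝ => fderiv ℝ f (a + t • (x - a)) (x - a) :=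
    (hf.continuous_fderiv_segment a x).clm_apply continuous_const
  simpa using integral_eq_sub_of_hasDerivAt (fun t _ => hderiv t) (hcont.intervalIntegrable 0 1)

end Segment

theorem EuclideanSpace.sum_mul_apply_single {ι : Type*} [Fintype ι] [DecidableEq ι]
    (L : EuclideanSpace ℝ ι →L[ℝ] ℝ) (v : EuclideanSpace ℝ ι) :
    ∑ i, v i * L (EuclideanSpace.single i 1) = L v := by
  conv_rhs => rw [← (EuclideanSpace.basisFun ι ℝ).sum_repr v]
  simp [map_sum, smul_eq_mul]

/-- **Integrated gradients satisfies the completeness axiom.**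
For a continuously differentiable `F : ℝ^d → ℝ`, an input `x` and a baseline
`a`, the integrated gradients attributions
`IGᵢ = (xᵢ − aᵢ) ∫_0^1 (∂F/∂xᵢ)(a + α(x − a)) dα` sum to `F(x) − F(a)`. -/
theorem integrated_gradients_completeness
    (d : ℕ) (F : EuclideanSpace ℝ (Fin d) → ℝ) (hF : ContDiff ℝ 1 F)
    (x a : EuclideanSpace ℝ (Fin d)) :
    ∑ i, (x i - a i) *
      (∫ α in (0:ℝ)..1, fderiv ℝ F (a + α • (x - a)) (EuclideanSpace.single i 1))
      = F x - F a := by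
  have hφ :
      IntervalIntegrable (fun α : ℝ => fderiv ℝ F (a + α • (x - a))) MeasureTheory.volume 0 1 :=
    (hF.continuous_fderiv_segment a x).intervalIntegrable 0 1
  simp_rw [← ContinuousLinearMap.intervalIntegral_apply hφ, ← PiLp.sub_apply]
  rw [EuclideanSpace.sum_mul_apply_single, ContinuousLinearMap.intervalIntegral_apply hφ]
  exact hF.integral_fderiv_segment_apply a x
end
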